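/- Let σ : T → [0,∞) be a Carleson measure with constant C, i.e. Σ_{y ∈ T_x} σ(y) ≤ C ν(∂T_x) for every x ∈ T. Then for every f ∈ L¹(∂T, ν) and every λ > 0, Σ_{x ∈ T : |𝒫f(x)| > λ} σ(x) ≤ (C/λ) ‖f‖_{L¹(ν)}. -/

import Mathlib

/-!
If `λ < |𝒫f(x)|` then `λ ν(∂T_x) ≤ ∫_{∂T_x} |f| dν`. Given finitely many such vertices, keep
those that lie below no other one: their boundary sectors are pairwise disjoint, and every
vertex lies in the tree sector `T_m` of one of them. The Carleson condition on each `T_m`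
and the disjointness of the `∂T_m` then give `Σ σ ≤ C Σ_m ν(∂T_m) ≤ (C/λ) ‖f‖₁`.
-/

open MeasureTheory
open scoped ENNReal NNReal

/-- The punctured boundary `∂T` of the tree: maps `ω : ℤ → T` with `lev (ω j) = j`
and `par (ω j) = ω (j+1)`. -/
def PBoundary {T : Type*} (par : T → T) (lev : T → ℤ) : Type _ :=
  {ω : ℤ → T // (∀ j : ℤ, lev (ω j) = j) ∧ ∀ j : ℤ, par (ω j) = ω (j + 1)}

/-- The boundary sector `∂T_x`. -/
def sector {T : Type*} (par : T → T) (lev : T → ℤ) (x : T) : Set (PBoundary par lev) :=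
  {ω : PBoundary par lev | ω.1 (lev x) = x}

/-- The σ-algebra on `∂T` generated by the sectors. -/
instance {T : Type*} (par : T → T) (lev : T → ℤ) : MeasurableSpace (PBoundary par lev) :=
  MeasurableSpace.generateFrom (Set.range (sector par lev))

/-- The flow measure `m_ν x = ν (∂T_x)` (as a real number). -/
noncomputable def mnu {T : Type*} (par : T → T) (lev : T → ℤ)
    (ν : Measure (PBoundary par lev)) (x : T) : ℝ :=
  (ν (sector par lev x)).toReal

/-- The Poisson integral operator `𝒫 g (x) = m_ν(x)⁻¹ ∫_{∂T_x} g dν`. -/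
noncomputable def poisson {T : Type*} (par : T → T) (lev : T → ℤ)
    (ν : Measure (PBoundary par lev)) (g : PBoundary par lev → ℝ) (x : T) : ℝ :=
  (mnu par lev ν x)⁻¹ * ∫ ω in sector par lev x, g ω ∂ν

/-- The sector `T_x = {y ∈ T : y lies below x}`. -/
def tsector {T : Type*} (par : T → T) (x : T) : Set T :=
  {y : T | ∃ n : ℕ, par^[n] y = x}

-- When `μ s ∈ {0, ∞}` or `f` is not integrable on `s`, the average is the junk value `0`.
theorem ofReal_mul_le_setLIntegral_enorm_of_lt_abs_setAverage {α : Type*} [MeasurableSpace α]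
    {μ : Measure α} {s : Set α} {f : α → ℝ} {c : ℝ} (h : c < |⨍ x in s, f x ∂μ|) :
    ENNReal.ofReal c * μ s ≤ ∫⁻ x in s, ‖f x‖ₑ ∂μ := by
  rcases le_or_gt c 0 with hc | hc
  · simp [ENNReal.ofReal_of_nonpos hc]
  rw [setAverage_eq, smul_eq_mul, abs_mul, abs_inv, abs_of_nonneg measureReal_nonneg] at h
  have hs : 0 < μ.real s := by
    by_contra! hs
    rw [le_antisymm hs measureReal_nonneg, inv_zero, zero_mul] at h
    exact hc.not_gt h
  calc ENNReal.ofReal c * μ s = ENNReal.ofReal (μ.real s * c) := by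
        rw [mul_comm, ENNReal.ofReal_mul measureReal_nonneg,
          ofReal_measureReal (ENNReal.toReal_pos_iff.1 hs).2.ne]
    _ ≤ ENNReal.ofReal |∫ x in s, f x ∂μ| :=
        ENNReal.ofReal_le_ofReal ((lt_inv_mul_iff₀ hs).1 h).le
    _ ≤ ∫⁻ x in s, ‖f x‖ₑ ∂μ := by
        rw [← Real.enorm_eq_ofReal_abs]
        exact enorm_integral_le_lintegral_enorm _

section Tree

variable {T : Type*} {par : T → T} {lev : T → ℤ}

theorem PBoundary.iterate_par_apply (ω : PBoundary par lev) (j : ℤ) (n : ℕ) :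
    par^[n] (ω.1 j) = ω.1 (j + n) := by
  induction n with
  | zero => simp
  | succ n ih =>
    rw [Function.iterate_succ_apply', ih, ω.2.2, Nat.cast_succ, add_assoc]

theorem lev_iterate (hlev : ∀ x : T, lev (par x) = lev x + 1) (x : T) (n : ℕ) :
    lev (par^[n] x) = lev x + n := by
  induction n with
  | zero => simp
  | succ n ih => rw [Function.iterate_succ_apply', hlev, ih, Nat.cast_succ, add_assoc]

theorem mem_tsector_trans {a b c : T} (hab : a ∈ tsector par b) (hbc : b ∈ tsector par c) :
    a ∈ tsector par c := by
  obtain ⟨n, rfl⟩ := hab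
  obtain ⟨k, rfl⟩ := hbc
  exact ⟨k + n, Function.iterate_add_apply _ _ _ _⟩

theorem eq_of_mem_tsector_of_lev_le (hlev : ∀ x : T, lev (par x) = lev x + 1) {a b : T}
    (hab : a ∈ tsector par b) (hle : lev b ≤ lev a) : a = b := by
  obtain ⟨n, rfl⟩ := hab
  have hn : n = 0 := by have := lev_iterate hlev a n; omega
  simp [hn]

theorem mem_tsector_of_mem_sector {a b : T} {ω : PBoundary par lev}
    (ha : ω ∈ sector par lev a) (hb : ω ∈ sector par lev b) (hle : lev a ≤ lev b) :
    a ∈ tsector par b := by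
  have ha' : ω.1 (lev a) = a := ha
  have hb' : ω.1 (lev b) = b := hb
  have h := ω.iterate_par_apply (lev a) (lev b - lev a).toNat
  rw [ha', Int.toNat_of_nonneg (sub_nonneg.2 hle), add_sub_cancel, hb'] at h
  exact ⟨_, h⟩

theorem measurableSet_sector (x : T) : MeasurableSet (sector par lev x) :=
  MeasurableSpace.measurableSet_generateFrom ⟨x, rfl⟩

theorem poisson_eq_setAverage (ν : Measure (PBoundary par lev)) (f : PBoundary par lev → ℝ)
    (x : T) : poisson par lev ν f x = ⨍ ω in sector par lev x, f ω ∂ν := by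
  rw [setAverage_eq, smul_eq_mul]
  rfl

open Classical in
noncomputable def maximalVertices (par : T → T) (F : Finset T) : Finset T :=
  F.filter fun b => ∀ b' ∈ F, b ∈ tsector par b' → b' = b

theorem mem_maximalVertices {F : Finset T} {b : T} :
    b ∈ maximalVertices par F ↔ b ∈ F ∧ ∀ b' ∈ F, b ∈ tsector par b' → b' = b := by
  classical
  exact Finset.mem_filter

theorem maximalVertices_subset (F : Finset T) : maximalVertices par F ⊆ F :=
  fun _ hb => (mem_maximalVertices.1 hb).1

theorem exists_mem_maximalVertices (hlev : ∀ x : T, lev (par x) = lev x + 1) {F : Finset T}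
    {x : T} (hx : x ∈ F) : ∃ m ∈ maximalVertices par F, x ∈ tsector par m := by
  classical
  obtain ⟨b, hb, hmax⟩ := (F.filter fun b => x ∈ tsector par b).exists_max_image lev
    ⟨x, Finset.mem_filter.2 ⟨hx, 0, rfl⟩⟩
  rw [Finset.mem_filter] at hb
  refine ⟨b, mem_maximalVertices.2 ⟨hb.1, fun b' hb' hbb' => ?_⟩, hb.2⟩
  have hle := hmax b' (Finset.mem_filter.2 ⟨hb', mem_tsector_trans hb.2 hbb'⟩)
  exact (eq_of_mem_tsector_of_lev_le hlev hbb' hle).symm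

theorem pairwiseDisjoint_sector_maximalVertices (F : Finset T) :
    (maximalVertices par F : Set T).PairwiseDisjoint (sector par lev) := by
  suffices h : ∀ a ∈ maximalVertices par F, ∀ b ∈ maximalVertices par F,
      ∀ ω ∈ sector par lev a, ω ∈ sector par lev b → lev a ≤ lev b → a = b by
    intro a ha b hb hab
    refine Set.disjoint_left.2 fun ω hωa hωb => hab ?_
    rcases le_total (lev a) (lev b) with hle | hle
    · exact h a ha b hb ω hωa hωb hle
    · exact (h b hb a ha ω hωb hωa hle).symm
  intro a ha b hb ω hωa hωb hle
  exact ((mem_maximalVertices.1 ha).2 b (maximalVertices_subset F hb)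
    (mem_tsector_of_mem_sector hωa hωb hle)).symm

variable {ν : Measure (PBoundary par lev)} {σ : T → ℝ≥0∞} {C : ℝ≥0∞}

theorem sum_le_mul_measure_univ_of_le (hlev : ∀ x : T, lev (par x) = lev x + 1)
    (hσ : ∀ x : T, ∑' y : tsector par x, σ y ≤ C * ν (sector par lev x))
    (ρ : Measure (PBoundary par lev)) {F : Finset T}
    (hF : ∀ x ∈ F, ν (sector par lev x) ≤ ρ (sector par lev x)) :
    ∑ x ∈ F, σ x ≤ C * ρ Set.univ := by
  set M := maximalVertices par F
  calc ∑ x ∈ F, σ x ≤ ∑ x ∈ F, ∑ m ∈ M, (tsector par m).indicator σ x := by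
        refine Finset.sum_le_sum fun x hx => ?_
        obtain ⟨m, hm, hxm⟩ := exists_mem_maximalVertices hlev hx
        rw [← Set.indicator_of_mem hxm σ]
        exact Finset.single_le_sum (f := fun m => (tsector par m).indicator σ x)
          (fun _ _ => zero_le) hm
    _ = ∑ m ∈ M, ∑ x ∈ F, (tsector par m).indicator σ x := Finset.sum_comm
    _ ≤ ∑ m ∈ M, ∑' y : tsector par m, σ y := by
        gcongr with m
        rw [tsum_subtype]
        exact ENNReal.sum_le_tsum _
    _ ≤ ∑ m ∈ M, C * ρ (sector par lev m) := by
        gcongr with m hm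
        exact (hσ m).trans (by gcongr C * ?_; exact hF m (maximalVertices_subset F hm))
    _ = C * ρ (⋃ m ∈ M, sector par lev m) := by
        rw [measure_biUnion_finset (pairwiseDisjoint_sector_maximalVertices F)
          fun m _ => measurableSet_sector m, Finset.mul_sum]
    _ ≤ C * ρ Set.univ := by gcongr; exact Set.subset_univ _

theorem tsum_le_mul_measure_univ_of_le (hlev : ∀ x : T, lev (par x) = lev x + 1)
    (hσ : ∀ x : T, ∑' y : tsector par x, σ y ≤ C * ν (sector par lev x))
    (ρ : Measure (PBoundary par lev)) {E : Set T}
    (hE : ∀ x ∈ E, ν (sector par lev x) ≤ ρ (sector par lev x)) :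
    ∑' x : E, σ x ≤ C * ρ Set.univ := by
  refine ENNReal.summable.tsum_le_of_sum_le fun s => ?_
  refine (Finset.sum_map s (Function.Embedding.subtype _) σ).symm.trans_le
    (sum_le_mul_measure_univ_of_le hlev hσ ρ fun x hx => hE x ?_)
  obtain ⟨y, -, rfl⟩ := Finset.mem_map.1 hx
  exact y.2

end Tree

theorem stmt10_general {T : Type*} (par : T → T) (lev : T → ℤ)
    (hlev : ∀ x : T, lev (par x) = lev x + 1)
    (ν : Measure (PBoundary par lev))
    (σ : T → ℝ≥0) (C : ℝ≥0)
    (hσ : ∀ x : T, ∑' y : tsector par x, (σ y.1 : ℝ≥0∞) ≤ (C : ℝ≥0∞) * ν (sector par lev x))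
    (f : PBoundary par lev → ℝ) (hf : Integrable f ν)
    (lam : ℝ) (hlam : 0 < lam) :
    ∑' x : {x : T | lam < |poisson par lev ν f x|}, (σ x.1 : ℝ≥0∞)
      ≤ ((C : ℝ≥0∞) / ENNReal.ofReal lam) * ENNReal.ofReal (∫ ω, |f ω| ∂ν) := by
  set L := ENNReal.ofReal lam
  have hL : L ≠ 0 := (ENNReal.ofReal_pos.2 hlam).ne'
  calc ∑' x : {x : T | lam < |poisson par lev ν f x|}, (σ x.1 : ℝ≥0∞)
      ≤ C * (L⁻¹ • ν.withDensity fun ω => ‖f ω‖ₑ) Set.univ := by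
        refine tsum_le_mul_measure_univ_of_le (σ := fun x => (σ x : ℝ≥0∞)) hlev hσ _
          fun x hx => ?_
        rw [Measure.smul_apply, withDensity_apply _ (measurableSet_sector x), smul_eq_mul,
          ← ENNReal.div_eq_inv_mul,
          ENNReal.le_div_iff_mul_le (Or.inl hL) (Or.inl ENNReal.ofReal_ne_top), mul_comm]
        rw [Set.mem_ofPred_eq, poisson_eq_setAverage] at hx
        exact ofReal_mul_le_setLIntegral_enorm_of_lt_abs_setAverage hx
    _ = C / L * ENNReal.ofReal (∫ ω, |f ω| ∂ν) := by
        rw [Measure.smul_apply, withDensity_apply _ MeasurableSet.univ, Measure.restrict_univ,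
          ← ofReal_integral_norm_eq_lintegral_enorm hf, smul_eq_mul, ← mul_assoc,
          ENNReal.div_eq_inv_mul, mul_comm (C : ℝ≥0∞)]
        simp only [Real.norm_eq_abs]

/-- If `σ` is a Carleson measure with constant `C`, then for every
`f ∈ L¹(∂T,ν)` and `λ > 0`, `Σ_{x : |𝒫f(x)| > λ} σ(x) ≤ (C/λ) ‖f‖_{L¹(ν)}`. -/
theorem stmt10 {T : Type*} [Nonempty T] (par : T → T) (lev : T → ℤ)
    (hlev : ∀ x : T, lev (par x) = lev x + 1)
    (hfin : ∀ x : T, {y : T | par y = x}.Finite)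
    (hsucc : ∀ x : T, ∃ y : T, par y = x)
    (hconn : ∀ x y : T, ∃ n m : ℕ, par^[n] x = par^[m] y)
    (ν : Measure (PBoundary par lev))
    (hν : ∀ x : T, 0 < ν (sector par lev x) ∧ ν (sector par lev x) < ⊤)
    (σ : T → ℝ≥0) (C : ℝ≥0)
    (hσ : ∀ x : T, ∑' y : tsector par x, (σ y.1 : ℝ≥0∞) ≤ (C : ℝ≥0∞) * ν (sector par lev x))
    (f : PBoundary par lev → ℝ) (hf : Integrable f ν)
    (lam : ℝ) (hlam : 0 < lam) :
    ∑' x : {x : T | lam < |poisson par lev ν f x|}, (σ x.1 : ℝ≥0∞)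
      ≤ ((C : ℝ≥0∞) / ENNReal.ofReal lam) * ENNReal.ofReal (∫ ω, |f ω| ∂ν) :=
  stmt10_general par lev hlev ν σ C hσ f hf lam hlam
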